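/- arXiv:2406.09593 — 3 statements merged into one kernel-verified Lean document; each statement's English description precedes it below -/
import Mathlib

section
/- Let Λ be the submonoid of ℚ_{≥0} generated by {1/p : p a prime number}. Then: (a) Λ does not have bounded factorization (indeed, 1 ∈ Λ can be written as the sum of p copies of the nonzero element 1/p for every prime p); but (b) Λ is well-founded, i.e. the strict divisibility relation g <_Λ h (meaning there exists nonzero q ∈ Λ with g + q = h) admits no infinite strictly descending chains; equivalently, <_Λ is a well-founded relation on Λ. -/
/-!
Write an element of `Λ` as `∑ c p / p` with `c : Nat.Primes →₀ ℕ`. The coefficients are not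
unique, but their residues `c p % p` are: all terms other than `c p / p` are `p`-adically
integral. Hence so is the integer part `∑ c p / p` (in `ℕ`), and the weight
`∑ₚ (c p / p, c p % p)` in `ℕ ×ₗ ℕ` depends only on the element. This weight is superadditive
(at each prime, either the residues add up without a carry or the integer part grows) and
positive on nonzero elements, so it strictly increases along `<_Λ`.
-/

/-- `Λ` has bounded factorization. -/
def HasBoundedFactorization (Λ : Type*) [AddCommMonoid Λ] : Prop :=
  ∀ g : Λ, ∃ N : ℕ, ∀ (s : ℕ) (f : Fin s → Λ),
    (∀ i, f i ≠ 0) → (∑ i, f i) = g → s ≤ N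

/-- The submonoid of `ℚ_{≥0}` generated by the reciprocals of the primes. -/
def primeRecipMonoid : AddSubmonoid ℚ :=
  AddSubmonoid.closure {q : ℚ | ∃ p : ℕ, p.Prime ∧ q = 1 / p}

namespace PrimeRecip

def recipSum (c : Nat.Primes →₀ ℕ) : ℚ := c.sum fun p n => (n : ℚ) / p

lemma recipSum_add (c d : Nat.Primes →₀ ℕ) : recipSum (c + d) = recipSum c + recipSum d :=
  Finsupp.sum_add_index' (by simp) (fun _ _ _ => by push_cast; ring)

lemma recipSum_single (p : Nat.Primes) (n : ℕ) : recipSum (Finsupp.single p n) = n / p :=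
  Finsupp.sum_single_index (by simp)

lemma mem_primeRecipMonoid_iff {x : ℚ} : x ∈ primeRecipMonoid ↔ ∃ c, recipSum c = x := by
  have hgen : {q : ℚ | ∃ p : ℕ, p.Prime ∧ q = 1 / p} =
      Set.range fun p : Nat.Primes => 1 / (p : ℚ) := by
    ext q
    exact ⟨fun ⟨p, hp, hq⟩ => ⟨⟨p, hp⟩, hq.symm⟩, fun ⟨p, hq⟩ => ⟨p, p.prop, hq.symm⟩⟩
  rw [primeRecipMonoid, hgen, AddSubmonoid.mem_closure_range_iff]
  simp only [recipSum, nsmul_eq_mul, mul_one_div, eq_comm]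

lemma padicNorm_recipSum_le_one {p : Nat.Primes} {c : Nat.Primes →₀ ℕ} (hc : c p = 0) :
    padicNorm p (recipSum c) ≤ 1 := by
  have := Fact.mk p.prop
  refine padicNorm.sum_le' (fun q hq => ?_) zero_le_one
  have hqp : q ≠ p := by rintro rfl; exact Finsupp.mem_support_iff.mp hq hc
  have hq : padicNorm p q = 1 := (padicNorm.nat_eq_one_iff _).mpr fun h =>
    hqp (Nat.Primes.coe_nat_injective ((Nat.prime_dvd_prime_iff_eq p.prop q.prop).mp h).symm)
  rw [padicNorm.div, hq, div_one]
  exact padicNorm.of_nat _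

lemma recipSum_eq_add_erase (c : Nat.Primes →₀ ℕ) (p : Nat.Primes) :
    recipSum c = c p / p + recipSum (c.erase p) := by
  conv_lhs => rw [← Finsupp.single_add_erase p c]
  rw [recipSum_add, recipSum_single]

theorem modEq_of_recipSum_eq {c d : Nat.Primes →₀ ℕ} (h : recipSum c = recipSum d)
    (p : Nat.Primes) : c p ≡ d p [MOD p] := by
  have := Fact.mk p.prop
  have hp : (0 : ℚ) < p := by exact_mod_cast p.prop.pos
  have hdiff : (((d p : ℤ) - c p : ℤ) : ℚ) / p = recipSum (c.erase p) - recipSum (d.erase p) := by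
    rw [recipSum_eq_add_erase c p, recipSum_eq_add_erase d p] at h
    push_cast
    linarith [sub_div (d p : ℚ) (c p) p]
  have hle : padicNorm p (((d p : ℤ) - c p : ℤ) : ℚ) / padicNorm p p ≤ 1 := by
    rw [← padicNorm.div, hdiff]
    exact padicNorm.sub.trans (max_le (padicNorm_recipSum_le_one Finsupp.erase_same)
      (padicNorm_recipSum_le_one Finsupp.erase_same))
  rw [padicNorm.padicNorm_p_of_prime, div_le_one (inv_pos.mpr hp), ← zpow_neg_one] at hle
  exact Nat.modEq_iff_dvd.mpr (by simpa using (padicNorm.dvd_iff_norm_le (n := 1)).mpr hle)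

noncomputable def digits (c : Nat.Primes →₀ ℕ) : Nat.Primes →₀ ℕ :=
  Finsupp.onFinset c.support (fun p => c p % p) fun _ hp =>
    Finsupp.mem_support_iff.mpr fun h => hp (by simp [h])

def carry (c : Nat.Primes →₀ ℕ) : ℕ := c.sum fun p n => n / p

lemma recipSum_eq_carry_add (c : Nat.Primes →₀ ℕ) :
    recipSum c = carry c + recipSum (digits c) := by
  rw [recipSum, carry, digits, recipSum, Finsupp.onFinset_sum _ (by simp), Finsupp.sum,
    Finsupp.sum, Nat.cast_sum, ← Finset.sum_add_distrib]
  refine Finset.sum_congr rfl fun p _ => ?_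
  have hp : (p : ℚ) ≠ 0 := by exact_mod_cast p.prop.ne_zero
  field_simp
  exact_mod_cast (Nat.div_add_mod (c p) p).symm

lemma digits_eq_of_recipSum_eq {c d : Nat.Primes →₀ ℕ} (h : recipSum c = recipSum d) :
    digits c = digits d :=
  Finsupp.ext fun p => modEq_of_recipSum_eq h p

lemma carry_eq_of_recipSum_eq {c d : Nat.Primes →₀ ℕ} (h : recipSum c = recipSum d) :
    carry c = carry d := by
  have h' := h
  rw [recipSum_eq_carry_add c, recipSum_eq_carry_add d, digits_eq_of_recipSum_eq h] at h'
  exact_mod_cast add_right_cancel h'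

def digitWeight (p n : ℕ) : ℕ ×ₗ ℕ := toLex (n / p, n % p)

lemma digitWeight_zero (p : ℕ) : digitWeight p 0 = 0 := by simp [digitWeight]

lemma digitWeight_add_le (p a b : ℕ) :
    digitWeight p a + digitWeight p b ≤ digitWeight p (a + b) := by
  rw [digitWeight, digitWeight, digitWeight, ← toLex_add, Prod.Lex.toLex_le_toLex]
  rcases Nat.eq_zero_or_pos p with rfl | hp
  · simp
  rw [Nat.add_div hp]
  split_ifs with hcarry
  · left; simp
  · right; simp [Nat.add_mod, Nat.mod_eq_of_lt (not_le.mp hcarry)]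

lemma digitWeight_pos {p n : ℕ} (hn : n ≠ 0) : 0 < digitWeight p n := by
  rw [digitWeight, ← toLex_zero, Prod.Lex.toLex_lt_toLex]
  rcases Nat.eq_zero_or_pos (n / p) with hdiv | hdiv
  · have hmod := Nat.div_add_mod n p
    rw [hdiv, mul_zero, zero_add] at hmod
    exact .inr ⟨hdiv.symm, Nat.pos_of_ne_zero fun h => hn (hmod ▸ h)⟩
  · exact .inl hdiv

def weight (c : Nat.Primes →₀ ℕ) : ℕ ×ₗ ℕ := c.sum fun p n => digitWeight p n

lemma weight_eq_toLex (c : Nat.Primes →₀ ℕ) :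
    weight c = toLex (carry c, (digits c).sum fun _ n => n) := by
  rw [weight, carry, digits, Finsupp.onFinset_sum _ (fun _ => rfl), Finsupp.sum, Finsupp.sum,
    prod_mk_sum]
  exact (map_sum (toLexAddEquiv (ℕ × ℕ)) _ _).symm

lemma weight_eq_of_recipSum_eq {c d : Nat.Primes →₀ ℕ} (h : recipSum c = recipSum d) :
    weight c = weight d := by
  rw [weight_eq_toLex, weight_eq_toLex, carry_eq_of_recipSum_eq h, digits_eq_of_recipSum_eq h]

lemma weight_add_le (c d : Nat.Primes →₀ ℕ) : weight c + weight d ≤ weight (c + d) := by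
  classical
  have hzero : ∀ p ∈ c.support ∪ d.support, digitWeight p 0 = 0 := fun p _ => digitWeight_zero p
  rw [weight, weight, weight, Finsupp.sum_of_support_subset c Finset.subset_union_left _ hzero,
    Finsupp.sum_of_support_subset d Finset.subset_union_right _ hzero,
    Finsupp.sum_of_support_subset _ Finsupp.support_add _ hzero, ← Finset.sum_add_distrib]
  exact Finset.sum_le_sum fun p _ => digitWeight_add_le p _ _

lemma weight_pos {d : Nat.Primes →₀ ℕ} (hd : d ≠ 0) : 0 < weight d := by
  obtain ⟨p, hp⟩ := Finsupp.support_nonempty_iff.mpr hd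
  refine Finset.sum_pos' (fun q hq => ?_) ⟨p, hp, digitWeight_pos (Finsupp.mem_support_iff.mp hp)⟩
  exact (digitWeight_pos (Finsupp.mem_support_iff.mp hq)).le

theorem weight_lt_of_recipSum_add_eq {c d e : Nat.Primes →₀ ℕ} (hd : d ≠ 0)
    (h : recipSum c + recipSum d = recipSum e) : weight c < weight e := by
  rw [← recipSum_add] at h
  calc weight c < weight c + weight d := lt_add_of_pos_right _ (weight_pos hd)
    _ ≤ weight (c + d) := weight_add_le c d
    _ = weight e := weight_eq_of_recipSum_eq h

end PrimeRecip

lemma one_div_prime_mem_primeRecipMonoid {p : ℕ} (hp : p.Prime) :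
    (1 / p : ℚ) ∈ primeRecipMonoid :=
  AddSubmonoid.subset_closure ⟨p, hp, rfl⟩

lemma prime_nsmul_one_div {p : ℕ} (hp : p.Prime) : p • (1 / p : ℚ) = 1 := by
  rw [nsmul_eq_mul, mul_one_div_cancel (by exact_mod_cast hp.ne_zero)]

lemma one_mem_primeRecipMonoid : (1 : ℚ) ∈ primeRecipMonoid :=
  prime_nsmul_one_div Nat.prime_two ▸
    nsmul_mem (one_div_prime_mem_primeRecipMonoid Nat.prime_two) 2

theorem not_hasBoundedFactorization_primeRecipMonoid :
    ¬ HasBoundedFactorization primeRecipMonoid := by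
  intro hbdd
  obtain ⟨N, hN⟩ := hbdd ⟨1, one_mem_primeRecipMonoid⟩
  obtain ⟨p, hNp, hp⟩ := Nat.exists_infinite_primes (N + 1)
  have hle := hN p (fun _ => ⟨1 / p, one_div_prime_mem_primeRecipMonoid hp⟩)
    (fun _ h => by simpa [hp.ne_zero] using congrArg Subtype.val h)
    (Subtype.ext (by simpa using prime_nsmul_one_div hp))
  omega

theorem wellFounded_primeRecipMonoid :
    WellFounded (fun g h : primeRecipMonoid => (∃ q : primeRecipMonoid, g + q = h) ∧ g ≠ h) := by
  choose rep hrep using fun g : primeRecipMonoid => PrimeRecip.mem_primeRecipMonoid_iff.mp g.2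
  refine (InvImage.wf (fun g => PrimeRecip.weight (rep g)) wellFounded_lt).mono ?_
  rintro g h ⟨⟨q, rfl⟩, hne⟩
  refine PrimeRecip.weight_lt_of_recipSum_add_eq (d := rep q) (fun hq => hne ?_) (by simp [hrep])
  have hq0 : q = 0 := Subtype.ext (by simp [← hrep q, hq, PrimeRecip.recipSum])
  rw [hq0, add_zero]

/-- **Example 2.2**: the submonoid `Λ ⊆ ℚ_{≥0}` generated by `{1/p : p prime}` does not have
bounded factorization — indeed `1 ∈ Λ` is the sum of `p` copies of the nonzero element
`1/p ∈ Λ` for every prime `p` — but the strict divisibility relation on `Λ` is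
well-founded. -/
theorem primeRecipMonoid_wellFounded_not_boundedFactorization :
    ((1 : ℚ) ∈ primeRecipMonoid ∧
      ∀ p : ℕ, p.Prime → (1 / p : ℚ) ∈ primeRecipMonoid ∧ (1 / p : ℚ) ≠ 0 ∧
        p • (1 / p : ℚ) = 1) ∧
    ¬ HasBoundedFactorization primeRecipMonoid ∧
    WellFounded (fun g h : primeRecipMonoid => (∃ q : primeRecipMonoid, g + q = h) ∧ g ≠ h) :=
  ⟨⟨one_mem_primeRecipMonoid, fun p hp => ⟨one_div_prime_mem_primeRecipMonoid hp,
    by simp [hp.ne_zero], prime_nsmul_one_div hp⟩⟩,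
    not_hasBoundedFactorization_primeRecipMonoid, wellFounded_primeRecipMonoid⟩
end

section
/- Let p_n denote the n-th prime number, and let Λ be the submonoid of ℚ_{≥0} generated by {1} ∪ {n + 1/p_n : n ∈ ℕ, n ≥ 1}. Then Λ is pointed and has bounded factorization. (The key observation: for every q ∈ ℚ, the set {n ≥ 1 : n + 1/p_n ≤ q} is finite.) -/
/-- The `n`-th prime number (so `nthPrime 1 = 2`). -/
noncomputable def nthPrime (n : ℕ) : ℕ := Nat.nth Nat.Prime (n - 1)

/-- The submonoid of `ℚ_{≥0}` generated by `1` and `n + 1/pₙ` for `n ≥ 1`, where `pₙ`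
is the `n`-th prime. -/
noncomputable def exoticMonoid : AddSubmonoid ℚ :=
  AddSubmonoid.closure ({1} ∪ {q : ℚ | ∃ n : ℕ, 1 ≤ n ∧ q = n + 1 / (nthPrime n : ℚ)})

/-! All generators are at least `1`, hence so is every nonzero element of `exoticMonoid`.
Such a monoid is pointed since it lies in `ℚ_{≥0}`, and an element `g` is a sum of at most
`⌊g⌋` nonzero elements. -/

namespace AddSubmonoid

variable {M : Type*} [AddCommMonoid M] [PartialOrder M] [IsOrderedAddMonoid M]

theorem eq_zero_or_le_of_mem_closure {S : Set M} {c : M} (hc : 0 ≤ c) (hS : ∀ x ∈ S, c ≤ x)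
    {x : M} (hx : x ∈ closure S) : x = 0 ∨ c ≤ x := by
  induction hx using closure_induction with
  | mem x hx => exact .inr (hS x hx)
  | zero => exact .inl rfl
  | add x y _ _ hx hy =>
    rcases hx with rfl | hcx
    · simpa using hy
    rcases hy with rfl | hcy
    · exact .inr (by simpa using hcx)
    exact .inr (le_add_of_le_of_nonneg hcx (hc.trans hcy))

theorem eq_zero_and_eq_zero_of_add_eq_zero {P : AddSubmonoid M} (hP : ∀ x ∈ P, 0 ≤ x)
    {q q' : P} (h : q + q' = 0) : q = 0 ∧ q' = 0 := by
  have h' : (q : M) + q' = 0 := congrArg Subtype.val h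
  obtain ⟨hq, hq'⟩ := (add_eq_zero_iff_of_nonneg (hP q q.2) (hP q' q'.2)).mp h'
  exact ⟨Subtype.ext hq, Subtype.ext hq'⟩

end AddSubmonoid

theorem AddSubmonoid.hasBoundedFactorization_of_eq_zero_or_one_le {R : Type*} [Semiring R]
    [PartialOrder R] [IsOrderedRing R] [FloorSemiring R] {P : AddSubmonoid R}
    (hP : ∀ x ∈ P, x = 0 ∨ 1 ≤ x) : HasBoundedFactorization P := by
  intro g
  refine ⟨⌊(g : R)⌋₊, fun s f hf hsum => Nat.le_floor ?_⟩
  have one_le : ∀ i, (1 : R) ≤ f i := fun i =>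
    (hP _ (f i).2).resolve_left fun h => hf i (Subtype.ext h)
  calc (s : R) = ∑ _i : Fin s, (1 : R) := by simp
    _ ≤ ∑ i, (f i : R) := Finset.sum_le_sum fun i _ => one_le i
    _ = g := by rw [← AddSubmonoid.coe_finsetSum, hsum]

theorem exoticMonoid_eq_zero_or_one_le {q : ℚ} (hq : q ∈ exoticMonoid) : q = 0 ∨ 1 ≤ q := by
  refine AddSubmonoid.eq_zero_or_le_of_mem_closure zero_le_one ?_ hq
  rintro x (rfl | ⟨n, hn, rfl⟩)
  · exact le_rfl
  · have : (1 : ℚ) ≤ n := by exact_mod_cast hn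
    have : (0 : ℚ) ≤ 1 / (nthPrime n : ℚ) := by positivity
    linarith

/-- **Example 4.2**: the submonoid of `ℚ_{≥0}` generated by `1` and `n + 1/pₙ` (for `n ≥ 1`)
is pointed and has bounded factorization. -/
theorem exoticMonoid_pointed_boundedFactorization :
    (∀ q q' : exoticMonoid, q + q' = 0 → q = 0 ∧ q' = 0) ∧
    HasBoundedFactorization exoticMonoid := by
  have nonneg : ∀ q ∈ exoticMonoid, 0 ≤ q := fun q hq =>
    (exoticMonoid_eq_zero_or_one_le hq).elim (·.ge) (zero_le_one.trans ·)
  exact ⟨fun _ _ => AddSubmonoid.eq_zero_and_eq_zero_of_add_eq_zero nonneg,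
    AddSubmonoid.hasBoundedFactorization_of_eq_zero_or_one_le
      fun _ => exoticMonoid_eq_zero_or_one_le⟩
end

section
/- Let p_n denote the n-th prime number, and let Λ be the submonoid of ℚ_{≥0} generated by {1} ∪ {n + 1/p_n : n ∈ ℕ, n ≥ 1}. Then there is no 'flattening' map for Λ: there exists no additive monoid homomorphism φ : Λ → ℤ such that φ(g) > 0 for every nonzero g ∈ Λ. (Any such φ would satisfy p_n · φ(n + 1/p_n) = (n·p_n + 1) · φ(1) for all n, forcing p_n to divide φ(1) for every n, hence φ(1) = 0, a contradiction.) -/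
/-!
If `φ` were a flattening map, then applying it to `p • (n + 1/p) = (n * p + 1) • 1`, where `p`
is the `n`-th prime, gives `p * φ(n + 1/p) = (n * p + 1) * φ 1`, so `p ∣ φ 1`. As every prime
occurs as some `pₙ`, `φ 1` is divisible by all primes, hence `φ 1 = 0`, contradicting `φ 1 > 0`.
-/

theorem Int.eq_zero_of_forall_prime_dvd {a : ℤ} (h : ∀ p : ℕ, p.Prime → (p : ℤ) ∣ a) :
    a = 0 := by
  obtain ⟨p, hap, hp⟩ := Nat.exists_infinite_primes (a.natAbs + 1)
  exact Int.eq_zero_of_dvd_of_natAbs_lt_natAbs (h p hp) (by simpa using hap)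

theorem AddMonoidHom.natCast_dvd_of_nsmul_eq_nsmul {M : Type*} [AddMonoid M] (φ : M →+ ℤ)
    {p n : ℕ} {g x : M} (h : p • g = (n * p + 1) • x) : (p : ℤ) ∣ φ x := by
  have hφ : (p : ℤ) * φ g = (n * p + 1) * φ x := by
    simpa using congrArg φ h
  have : (p : ℤ) ∣ (n * p + 1) * φ x - n * p * φ x := by
    rw [← hφ]
    exact dvd_sub (dvd_mul_right _ _) ⟨n * φ x, by ring⟩
  simpa [add_mul] using this

theorem exists_nthPrime_eq {p : ℕ} (hp : p.Prime) : ∃ n, 1 ≤ n ∧ nthPrime n = p :=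
  ⟨Nat.count Nat.Prime p + 1, Nat.le_add_left 1 _, Nat.nth_count hp⟩

theorem one_mem_exoticMonoid : (1 : ℚ) ∈ exoticMonoid :=
  AddSubmonoid.subset_closure (Or.inl rfl)

theorem natCast_add_inv_nthPrime_mem_exoticMonoid {n : ℕ} (hn : 1 ≤ n) :
    (n : ℚ) + 1 / (nthPrime n : ℚ) ∈ exoticMonoid :=
  AddSubmonoid.subset_closure (Or.inr ⟨n, hn, rfl⟩)

theorem nsmul_natCast_add_one_div_eq {p : ℕ} (hp : p ≠ 0) (n : ℕ) :
    p • ((n : ℚ) + 1 / p) = (n * p + 1 : ℕ) • (1 : ℚ) := by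
  have hp0 : (p : ℚ) ≠ 0 := by exact_mod_cast hp
  simp only [nsmul_eq_mul]
  push_cast
  field_simp

/-- **Example 4.2**: there is no flattening map for the submonoid of `ℚ_{≥0}` generated by `1`
and `n + 1/pₙ` (`n ≥ 1`): no additive monoid homomorphism `φ : Λ → ℤ` is positive on all
nonzero elements of `Λ`. -/
theorem exoticMonoid_no_flattening :
    ¬ ∃ φ : exoticMonoid →+ ℤ, ∀ g : exoticMonoid, g ≠ 0 → 0 < φ g := by
  rintro ⟨φ, hφ⟩
  let one : exoticMonoid := ⟨1, one_mem_exoticMonoid⟩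
  have hdvd : ∀ p : ℕ, p.Prime → (p : ℤ) ∣ φ one := by
    intro p hp
    obtain ⟨n, hn, hnp⟩ := exists_nthPrime_eq hp
    let g : exoticMonoid := ⟨_, natCast_add_inv_nthPrime_mem_exoticMonoid hn⟩
    refine φ.natCast_dvd_of_nsmul_eq_nsmul (g := g) (n := n) (Subtype.ext ?_)
    simpa [g, one, hnp] using nsmul_natCast_add_one_div_eq hp.ne_zero n
  have hone : one ≠ 0 := fun h => one_ne_zero (congrArg Subtype.val h)
  exact (hφ one hone).ne' (Int.eq_zero_of_forall_prime_dvd hdvd)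
end
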